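/- For every norm ⦀·⦀ on ℝ^d and every function φ : {0,…,d} → [0,∞) with φ(0) = 0, the Capra biconjugate of φ∘ℓ0 satisfies, for all x ∈ ℝ^d with x ≠ 0, (φ∘ℓ0)^{¢¢'}(x) = (1/⦀x⦀) · min{ Σ_{l=1}^{d} φ(l) ⦀z^{(l)}⦀_l : z^{(1)},…,z^{(d)} ∈ ℝ^d, Σ_{l=1}^{d} ⦀z^{(l)}⦀_l ≤ ⦀x⦀, Σ_{l=1}^{d} z^{(l)} = x }, where the minimum is attained. -/

import Mathlib

open scoped BigOperators

noncomputable section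

/-- The Euclidean pairing `⟨x,y⟩ = ∑ i, x i * y i` on `Fin d → ℝ`. -/
def dotp {d : ℕ} (x y : Fin d → ℝ) : ℝ := ∑ i, x i * y i

/-- The coordinate subspace `R_K` of vectors vanishing outside `K`. -/
def RK {d : ℕ} (K : Finset (Fin d)) : Set (Fin d → ℝ) := {x | ∀ j ∉ K, x j = 0}

/-- Orthogonal projection onto `R_K`. -/
def projK {d : ℕ} (K : Finset (Fin d)) (x : Fin d → ℝ) : Fin d → ℝ :=
  fun i => if i ∈ K then x i else 0

/-- The ℓ0 pseudonorm: number of nonzero components. -/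
def ell0 {d : ℕ} (x : Fin d → ℝ) : ℕ := (Function.support x).ncard

/-- `N` is a norm on `ℝ^d`. -/
structure IsNorm {d : ℕ} (N : (Fin d → ℝ) → ℝ) : Prop where
  eq_zero_iff : ∀ x, N x = 0 ↔ x = 0
  smul : ∀ (c : ℝ) (x : Fin d → ℝ), N (c • x) = |c| * N x
  triangle : ∀ x y, N (x + y) ≤ N x + N y

/-- `⦀y⦀_{K,★}`: the dual norm (w.r.t. the Euclidean pairing), on the subspace `R_K`,
of the restriction of `N` to `R_K`. -/
def restStar {d : ℕ} (N : (Fin d → ℝ) → ℝ) (K : Finset (Fin d)) (y : Fin d → ℝ) : ℝ :=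
  sSup {r | ∃ x ∈ RK K, N x ≤ 1 ∧ r = dotp x y}

/-- The dual coordinate-k norm `⦀y⦀_{k,★} = sup_{|K| ≤ k} ⦀y_K⦀_{K,★}`. -/
def dualCoord {d : ℕ} (N : (Fin d → ℝ) → ℝ) (k : ℕ) (y : Fin d → ℝ) : ℝ :=
  sSup {r | ∃ K : Finset (Fin d), K.card ≤ k ∧ r = restStar N K (projK K y)}

/-- The coordinate-k norm: the dual norm of the dual coordinate-k norm. -/
def coordNorm {d : ℕ} (N : (Fin d → ℝ) → ℝ) (k : ℕ) (x : Fin d → ℝ) : ℝ :=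
  sSup {r | ∃ y : Fin d → ℝ, dualCoord N k y ≤ 1 ∧ r = dotp x y}

/-- The Capra coupling `¢(x,y) = ⟨x,y⟩/⦀x⦀` (with `¢(0,y) = 0`). -/
def capra {d : ℕ} (N : (Fin d → ℝ) → ℝ) (x y : Fin d → ℝ) : ℝ :=
  if x = 0 then 0 else dotp x y / N x

/-- Capra conjugate `f^¢(y) = sup_x ( ¢(x,y) ∔ (−f(x)) )`.
(EReal addition is the Moreau lower addition: `⊤ + ⊥ = ⊥`.) -/
def capraConj {d : ℕ} (N : (Fin d → ℝ) → ℝ) (f : (Fin d → ℝ) → EReal)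
    (y : Fin d → ℝ) : EReal :=
  ⨆ x : Fin d → ℝ, ((capra N x y : ℝ) : EReal) + (- f x)

/-- Capra biconjugate `f^{¢¢'}(x) = sup_y ( ¢(x,y) ∔ (−f^¢(y)) )`. -/
def capraBiconj {d : ℕ} (N : (Fin d → ℝ) → ℝ) (f : (Fin d → ℝ) → EReal)
    (x : Fin d → ℝ) : EReal :=
  ⨆ y : Fin d → ℝ, ((capra N x y : ℝ) : EReal) + (- capraConj N f y)

/-- Fenchel conjugate `g^★(y) = sup_x ( ⟨x,y⟩ ∔ (−g(x)) )`. -/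
def fenchelConj {d : ℕ} (g : (Fin d → ℝ) → EReal) (y : Fin d → ℝ) : EReal :=
  ⨆ x : Fin d → ℝ, ((dotp x y : ℝ) : EReal) + (- g x)

/-!
Write `F y = max_{0 ≤ l ≤ d} (⦀y⦀_{l,★} - φ l)`. The Capra conjugate of `φ ∘ ℓ0` is `F`:
`¢(x, ·) ≤ ⦀·⦀_{ℓ0 x,★}` because `x / ⦀x⦀` lies in the unit ball of `R_{supp x}`, and conversely a
near-maximiser of `⦀y⦀_{l,★}` can be perturbed to have exactly `l` nonzero coordinates. Hence
`(φ ∘ ℓ0)^{¢¢'} x = sup_y (⟨x, y⟩ - ⦀x⦀ F y) / ⦀x⦀`, and the numerator is the Lagrangian dual of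
the convex program whose value is `m`. Weak duality is Hölder's inequality
`⟨z, y⟩ ≤ ⦀z⦀_l ⦀y⦀_{l,★}` summed over a decomposition of `x`. Strong duality comes from separating
`(x, m - ε)` from the (compact, convex) truncated epigraph of the program and testing the
separating functional on decompositions concentrated on a single index `l`; this only needs
`⦀·⦀_{l,★}` to be the dual norm of `⦀·⦀_l`.
-/

open Set Bornology

lemma iSup_coe_ereal_eq {ι : Sort*} [Nonempty ι] {g : ι → ℝ} {a : ℝ} (h₁ : ∀ i, g i ≤ a)
    (h₂ : ∀ b < a, ∃ i, b < g i) : ⨆ i, (g i : EReal) = a := by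
  rw [← ciSup_eq_of_forall_le_of_forall_lt_exists_gt h₁ h₂]
  exact (Monotone.map_ciSup_of_continuousAt continuous_coe_real_ereal.continuousAt
    EReal.coe_strictMono.monotone ⟨a, forall_mem_range.2 h₁⟩).symm

lemma exists_dotProduct_le_of_isBounded {n : Type*} [Fintype n] {S : Set (n → ℝ)}
    (hS : IsBounded S) (y : n → ℝ) : ∃ B, ∀ x ∈ S, x ⬝ᵥ y ≤ B := by
  obtain ⟨B, hB⟩ :=
    (hS.isCompact_closure.image (continuous_id.dotProduct continuous_const)).bddAbove
  exact ⟨B, fun x hx => hB ⟨x, subset_closure hx, rfl⟩⟩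

lemma ContinuousLinearMap.exists_apply_eq_dotProduct {n : Type*} [Fintype n] [DecidableEq n]
    (ℓ : (n → ℝ) →L[ℝ] ℝ) : ∃ y : n → ℝ, ∀ z, ℓ z = z ⬝ᵥ y := by
  refine ⟨fun i => ℓ (Pi.single i 1), fun z => ?_⟩
  conv_lhs => rw [pi_eq_sum_univ' z]
  simp [map_sum, dotProduct]

lemma isBounded_setOf_seminorm_le {E : Type*} [NormedAddCommGroup E] [NormedSpace ℝ E]
    [FiniteDimensional ℝ E] (p : Seminorm ℝ E) (hp : ∀ x, p x = 0 → x = 0) (r : ℝ) :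
    IsBounded {x | p x ≤ r} := by
  obtain ⟨c, hc, hcp⟩ := (isCompact_sphere (0 : E) 1).exists_forall_le'
    p.convexOn.locallyLipschitz.continuous.continuousOn (a := 0)
    fun x hx => (apply_nonneg p x).lt_of_ne' fun h => by simp [hp x h] at hx
  refine (Metric.isBounded_closedBall (x := (0 : E)) (r := r / c)).subset fun x hx => ?_
  rw [mem_closedBall_zero_iff, le_div_iff₀ hc]
  have hxr : p x ≤ r := hx
  rcases eq_or_ne x 0 with rfl | hx0
  · simpa using hxr
  · have hcx := hcp (‖x‖⁻¹ • x) (by simp [norm_smul, hx0])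
    rw [map_smul_eq_mul, norm_inv, norm_norm, ← div_eq_inv_mul,
      le_div_iff₀ (norm_pos_iff.2 hx0)] at hcx
    linarith [mul_comm c ‖x‖]

lemma IsCompact.truncated_epigraph {F : Type*} [TopologicalSpace F] [T2Space F] {W : Set F}
    (hW : IsCompact W) {p : F → ℝ} (hp : Continuous p) (M : ℝ) :
    IsCompact ({q : F × ℝ | q.1 ∈ W ∧ p q.1 ≤ q.2} ∩ {q | q.2 ≤ M}) := by
  obtain ⟨a, ha⟩ := hW.bddBelow_image hp.continuousOn
  refine (hW.prod (isCompact_Icc (a := a) (b := M))).of_isClosed_subset ?_ ?_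
  · exact ((hW.isClosed.preimage continuous_fst).inter
      (isClosed_le (hp.comp continuous_fst) continuous_snd)).inter
      (isClosed_le continuous_snd continuous_const)
  · rintro ⟨w, r⟩ ⟨⟨hw, hwr⟩, hrM⟩
    exact ⟨hw, (ha ⟨w, hw, rfl⟩).trans hwr, hrM⟩

theorem exists_dual_sub_lt_of_isMinOn {E F : Type*} [NormedAddCommGroup E] [NormedSpace ℝ E]
    [NormedAddCommGroup F] [NormedSpace ℝ F] (A : F →L[ℝ] E) {W : Set F} (hW : IsCompact W)
    {p : F → ℝ} (hp : Continuous p) (hpW : ConvexOn ℝ W p) {w₀ : F} (hw₀ : w₀ ∈ W)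
    (hmin : ∀ w ∈ W, A w = A w₀ → p w₀ ≤ p w) {b : ℝ} (hb : b < p w₀) :
    ∃ ℓ : StrongDual ℝ E, ∀ w ∈ W, ℓ (A w) - p w < ℓ (A w₀) - b := by
  obtain ⟨M, hM⟩ := hW.bddAbove_image hp.continuousOn
  set S : Set (F × ℝ) := {q | q.1 ∈ W ∧ p q.1 ≤ q.2} ∩ {q | q.2 ≤ M}
  have hSconv : Convex ℝ S :=
    hpW.convex_epigraph.inter (convex_halfSpace_le (LinearMap.snd ℝ F ℝ).isLinear M)
  set L : F × ℝ →L[ℝ] E × ℝ := A.prodMap (ContinuousLinearMap.id ℝ ℝ)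
  have hmem : ∀ w ∈ W, (A w, p w) ∈ L '' S := fun w hw =>
    ⟨(w, p w), ⟨⟨hw, le_rfl⟩, hM ⟨w, hw, rfl⟩⟩, rfl⟩
  have hnot : (A w₀, b) ∉ L '' S := by
    rintro ⟨⟨w, r⟩, ⟨⟨hw, hwr⟩, -⟩, heq⟩
    simp only [L, ContinuousLinearMap.coe_prodMap', Prod.map_apply, ContinuousLinearMap.id_apply,
      Prod.mk.injEq] at heq
    linarith [hmin w hw heq.1, heq.2]
  obtain ⟨f, u, hfS, hfu⟩ := geometric_hahn_banach_closed_point (hSconv.linear_image L.toLinearMap)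
    ((hW.truncated_epigraph hp M).image L.continuous).isClosed hnot
  have hf : ∀ z r, f (z, r) = f (z, 0) + r * f (0, 1) := fun z r => by
    rw [← smul_eq_mul, ← map_smul, ← map_add, Prod.smul_mk, smul_zero, smul_eq_mul, mul_one,
      Prod.mk_add_mk, add_zero, zero_add]
  -- `(A w₀, p w₀)` lies in `L '' S` above the separated point `(A w₀, b)`: the slope is negative
  have hslope : f (0, 1) < 0 := by
    have := hfS _ (hmem w₀ hw₀)
    rw [hf] at this hfu
    nlinarith
  refine ⟨(-f (0, 1))⁻¹ • f.comp (ContinuousLinearMap.inl ℝ E ℝ), fun w hw => ?_⟩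
  have := hfS _ (hmem w hw)
  rw [hf] at this hfu
  simp only [smul_apply, ContinuousLinearMap.comp_apply, ContinuousLinearMap.inl_apply,
    smul_eq_mul]
  rw [← mul_lt_mul_iff_right₀ (neg_pos.2 hslope), mul_sub, mul_sub, ← mul_assoc, ← mul_assoc,
    mul_inv_cancel₀ (neg_pos.2 hslope).ne', one_mul, one_mul]
  linarith

section CoordinateNorms

variable {d : ℕ} {N : (Fin d → ℝ) → ℝ}

namespace IsNorm

def toSeminorm (hN : IsNorm N) : Seminorm ℝ (Fin d → ℝ) := Seminorm.of N hN.triangle hN.smul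

lemma zero (hN : IsNorm N) : N 0 = 0 := map_zero hN.toSeminorm

lemma nonneg (hN : IsNorm N) (x : Fin d → ℝ) : 0 ≤ N x := apply_nonneg hN.toSeminorm x

lemma neg (hN : IsNorm N) (x : Fin d → ℝ) : N (-x) = N x := map_neg_eq_map hN.toSeminorm x

lemma pos (hN : IsNorm N) {x : Fin d → ℝ} (hx : x ≠ 0) : 0 < N x :=
  (hN.nonneg x).lt_of_ne' (mt (hN.eq_zero_iff x).1 hx)

lemma continuous (hN : IsNorm N) : Continuous N :=
  hN.toSeminorm.convexOn.locallyLipschitz.continuous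

lemma isBounded_setOf_le (hN : IsNorm N) (r : ℝ) : IsBounded {x | N x ≤ r} :=
  isBounded_setOf_seminorm_le hN.toSeminorm (fun x => (hN.eq_zero_iff x).1) r

end IsNorm

section restStar

variable {K K' : Finset (Fin d)} {x y y' : Fin d → ℝ} {B : ℝ}

lemma dotProduct_projK (hx : x ∈ RK K) (y : Fin d → ℝ) : x ⬝ᵥ projK K y = x ⬝ᵥ y := by
  refine Finset.sum_congr rfl fun i _ => ?_
  by_cases hi : i ∈ K <;> simp [projK, hi, hx i]

lemma restStar_projK (N : (Fin d → ℝ) → ℝ) (K : Finset (Fin d)) (y : Fin d → ℝ) :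
    restStar N K (projK K y) = restStar N K y := by
  simp only [restStar]
  congr 1
  ext r
  exact exists_congr fun x => and_congr_right fun hx => by
    rw [show dotp x (projK K y) = dotp x y from dotProduct_projK hx y]

lemma dotProduct_le_restStar (hN : IsNorm N) (hx : x ∈ RK K) (hx1 : N x ≤ 1) :
    x ⬝ᵥ y ≤ restStar N K y := by
  obtain ⟨B, hB⟩ := exists_dotProduct_le_of_isBounded (hN.isBounded_setOf_le 1) y
  exact le_csSup ⟨B, by rintro r ⟨x, -, hx1, rfl⟩; exact hB x hx1⟩ ⟨x, hx, hx1, rfl⟩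

lemma restStar_le (hN : IsNorm N) (h : ∀ x ∈ RK K, N x ≤ 1 → x ⬝ᵥ y ≤ B) :
    restStar N K y ≤ B :=
  csSup_le ⟨0, 0, fun _ _ => rfl, by simp [hN.zero], (zero_dotProduct y).symm⟩
    (by rintro r ⟨x, hx, hx1, rfl⟩; exact h x hx hx1)

lemma exists_lt_dotProduct_of_lt_restStar (hN : IsNorm N) {c : ℝ} (hc : c < restStar N K y) :
    ∃ x ∈ RK K, N x ≤ 1 ∧ c < x ⬝ᵥ y := by
  by_contra! h
  exact (restStar_le hN h).not_gt hc

lemma restStar_nonneg (hN : IsNorm N) : 0 ≤ restStar N K y := by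
  simpa using dotProduct_le_restStar hN (x := 0) (fun _ _ => rfl) (by simp [hN.zero])

lemma restStar_mono (hN : IsNorm N) (h : K ⊆ K') : restStar N K y ≤ restStar N K' y :=
  restStar_le hN fun _ hx hx1 =>
    dotProduct_le_restStar hN (fun j hj => hx j fun hjK => hj (h hjK)) hx1

lemma restStar_add_le (hN : IsNorm N) :
    restStar N K (y + y') ≤ restStar N K y + restStar N K y' :=
  restStar_le hN fun x hx hx1 => by
    rw [dotProduct_add]
    exact add_le_add (dotProduct_le_restStar hN hx hx1) (dotProduct_le_restStar hN hx hx1)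

lemma restStar_smul_le (hN : IsNorm N) (r : ℝ) :
    restStar N K (r • y) ≤ |r| * restStar N K y := by
  refine restStar_le hN fun x hx hx1 => ?_
  rw [dotProduct_smul, smul_eq_mul]
  rcases le_total 0 r with hr | hr
  · rw [abs_of_nonneg hr]
    exact mul_le_mul_of_nonneg_left (dotProduct_le_restStar hN hx hx1) hr
  · have hnx : -x ∈ RK K := fun j hj => by simp [hx j hj]
    have := dotProduct_le_restStar hN (y := y) hnx ((hN.neg x).trans_le hx1)
    rw [neg_dotProduct] at this
    rw [abs_of_nonpos hr]
    nlinarith [mul_le_mul_of_nonneg_left this (neg_nonneg.2 hr)]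

lemma dotProduct_le_mul_restStar (hN : IsNorm N) (hx : x ∈ RK K) :
    x ⬝ᵥ y ≤ N x * restStar N K y := by
  rcases eq_or_ne x 0 with rfl | hx0
  · simp [hN.zero]
  have hNx := hN.pos hx0
  have := dotProduct_le_restStar hN (K := K) (y := y) (x := (N x)⁻¹ • x)
    (fun j hj => by simp [hx j hj])
    (by rw [hN.smul, abs_of_pos (inv_pos.2 hNx), inv_mul_cancel₀ hNx.ne'])
  rwa [smul_dotProduct, smul_eq_mul, inv_mul_le_iff₀ hNx] at this

lemma abs_apply_le_mul_restStar (hN : IsNorm N) {i : Fin d} (hi : i ∈ K) :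
    |y i| ≤ N (Pi.single i 1) * restStar N K y := by
  have hK : ∀ s : ℝ, s • Pi.single i (1 : ℝ) ∈ RK K := fun s j hj => by
    simp [show j ≠ i from fun h => hj (h ▸ hi)]
  have h₁ := dotProduct_le_mul_restStar hN (y := y) (hK 1)
  have h₂ := dotProduct_le_mul_restStar hN (y := y) (hK (-1))
  simp only [one_smul, neg_smul, hN.neg, neg_dotProduct, single_dotProduct, one_mul] at h₁ h₂
  exact abs_le.2 ⟨by linarith, h₁⟩

end restStar

section dualCoord

variable {l : ℕ} {K : Finset (Fin d)} {y : Fin d → ℝ} {B : ℝ}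

lemma dualCoord_eq_sSup (N : (Fin d → ℝ) → ℝ) (l : ℕ) (y : Fin d → ℝ) :
    dualCoord N l y = sSup ((fun K => restStar N K y) '' {K | K.card ≤ l}) := by
  simp only [dualCoord, restStar_projK]
  congr 1
  ext r
  simp [eq_comm]

lemma nonempty_restStar_image (N : (Fin d → ℝ) → ℝ) (l : ℕ) (y : Fin d → ℝ) :
    ((fun K => restStar N K y) '' {K : Finset (Fin d) | K.card ≤ l}).Nonempty :=
  ⟨_, mem_image_of_mem _ (show (∅ : Finset (Fin d)) ∈ {K : Finset (Fin d) | K.card ≤ l} by simp)⟩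

lemma restStar_le_dualCoord (hK : K.card ≤ l) : restStar N K y ≤ dualCoord N l y := by
  rw [dualCoord_eq_sSup]
  exact le_csSup (toFinite _).bddAbove (mem_image_of_mem _ hK)

lemma dualCoord_le (h : ∀ K : Finset (Fin d), K.card ≤ l → restStar N K y ≤ B) :
    dualCoord N l y ≤ B := by
  rw [dualCoord_eq_sSup]
  exact csSup_le (nonempty_restStar_image N l y) (forall_mem_image.2 h)

lemma exists_restStar_eq_dualCoord (N : (Fin d → ℝ) → ℝ) (l : ℕ) (y : Fin d → ℝ) :
    ∃ K : Finset (Fin d), K.card ≤ l ∧ restStar N K y = dualCoord N l y := by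
  rw [dualCoord_eq_sSup]
  exact (nonempty_restStar_image N l y).csSup_mem (toFinite _)

lemma dualCoord_nonneg (hN : IsNorm N) : 0 ≤ dualCoord N l y :=
  (restStar_nonneg hN).trans (restStar_le_dualCoord (K := ∅) (by simp))

lemma dualCoord_zero_left (hN : IsNorm N) : dualCoord N 0 y = 0 := by
  refine le_antisymm (dualCoord_le fun K hK => restStar_le hN fun x hx _ => ?_)
    (dualCoord_nonneg hN)
  obtain rfl : K = ∅ := Finset.card_eq_zero.1 (Nat.le_zero.1 hK)
  simp [show x = 0 from funext fun j => hx j (Finset.notMem_empty j)]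

def dualCoordSeminorm (hN : IsNorm N) (l : ℕ) : Seminorm ℝ (Fin d → ℝ) :=
  Seminorm.ofSMulLE (dualCoord N l)
    (le_antisymm (dualCoord_le fun K _ => by simpa using restStar_smul_le hN (K := K) (y := 0) 0)
      (dualCoord_nonneg hN))
    (fun _ _ => dualCoord_le fun _ hK => (restStar_add_le hN).trans
      (add_le_add (restStar_le_dualCoord hK) (restStar_le_dualCoord hK)))
    (fun r _ => dualCoord_le fun _ hK => (restStar_smul_le hN r).trans
      (mul_le_mul_of_nonneg_left (restStar_le_dualCoord hK) (abs_nonneg r)))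

@[simp] lemma coe_dualCoordSeminorm (hN : IsNorm N) (l : ℕ) :
    ⇑(dualCoordSeminorm hN l) = dualCoord N l := rfl

lemma dualCoord_zero_right (hN : IsNorm N) : dualCoord N l 0 = 0 :=
  map_zero (dualCoordSeminorm hN l)

lemma dualCoord_neg (hN : IsNorm N) : dualCoord N l (-y) = dualCoord N l y :=
  map_neg_eq_map (dualCoordSeminorm hN l) y

lemma dualCoord_smul (hN : IsNorm N) (r : ℝ) : dualCoord N l (r • y) = |r| * dualCoord N l y :=
  map_smul_eq_mul (dualCoordSeminorm hN l) r y

lemma abs_apply_le_mul_dualCoord (hN : IsNorm N) (hl : 1 ≤ l) (y : Fin d → ℝ) (i : Fin d) :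
    |y i| ≤ N (Pi.single i 1) * dualCoord N l y :=
  (abs_apply_le_mul_restStar hN (Finset.mem_singleton_self i)).trans
    (mul_le_mul_of_nonneg_left (restStar_le_dualCoord (by simpa using hl)) (hN.nonneg _))

lemma eq_zero_of_dualCoord_eq_zero (hN : IsNorm N) (hl : 1 ≤ l) (hy : dualCoord N l y = 0) :
    y = 0 :=
  funext fun i => abs_nonpos_iff.1 <| by
    simpa [hy] using abs_apply_le_mul_dualCoord hN hl y i

lemma isBounded_setOf_dualCoord_le (hN : IsNorm N) (hl : 1 ≤ l) (r : ℝ) :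
    IsBounded {y | dualCoord N l y ≤ r} :=
  isBounded_setOf_seminorm_le (dualCoordSeminorm hN l)
    (fun _ hy => eq_zero_of_dualCoord_eq_zero hN hl hy) r

end dualCoord

section coordNorm

variable {l : ℕ} {K : Finset (Fin d)} {x y z : Fin d → ℝ} {B : ℝ}

lemma dotProduct_le_coordNorm (hN : IsNorm N) (hl : 1 ≤ l) (hy : dualCoord N l y ≤ 1) :
    x ⬝ᵥ y ≤ coordNorm N l x := by
  obtain ⟨B, hB⟩ := exists_dotProduct_le_of_isBounded (isBounded_setOf_dualCoord_le hN hl 1) x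
  refine le_csSup ⟨B, ?_⟩ ⟨y, hy, rfl⟩
  rintro r ⟨y, hy, rfl⟩
  exact (dotProduct_comm x y).trans_le (hB y hy)

lemma coordNorm_le (hN : IsNorm N) (h : ∀ y, dualCoord N l y ≤ 1 → x ⬝ᵥ y ≤ B) :
    coordNorm N l x ≤ B :=
  csSup_le ⟨_, 0, (dualCoord_zero_right hN).trans_le zero_le_one, rfl⟩
    (by rintro r ⟨y, hy, rfl⟩; exact h y hy)

lemma coordNorm_zero (hN : IsNorm N) (hl : 1 ≤ l) : coordNorm N l 0 = 0 :=
  le_antisymm (coordNorm_le hN fun y _ => by simp) (by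
    simpa using dotProduct_le_coordNorm hN hl (x := 0) ((dualCoord_zero_right hN).trans_le
      zero_le_one))

lemma coordNorm_add_le (hN : IsNorm N) (hl : 1 ≤ l) (x x' : Fin d → ℝ) :
    coordNorm N l (x + x') ≤ coordNorm N l x + coordNorm N l x' :=
  coordNorm_le hN fun _ hy => by
    rw [add_dotProduct]
    exact add_le_add (dotProduct_le_coordNorm hN hl hy) (dotProduct_le_coordNorm hN hl hy)

lemma coordNorm_smul_le (hN : IsNorm N) (hl : 1 ≤ l) (r : ℝ) (x : Fin d → ℝ) :
    coordNorm N l (r • x) ≤ |r| * coordNorm N l x := by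
  refine coordNorm_le hN fun y hy => ?_
  rw [smul_dotProduct, smul_eq_mul]
  rcases le_total 0 r with hr | hr
  · rw [abs_of_nonneg hr]
    exact mul_le_mul_of_nonneg_left (dotProduct_le_coordNorm hN hl hy) hr
  · have := dotProduct_le_coordNorm hN hl (x := x) ((dualCoord_neg hN).trans_le hy)
    rw [dotProduct_neg] at this
    rw [abs_of_nonpos hr]
    nlinarith [mul_le_mul_of_nonneg_left this (neg_nonneg.2 hr)]

def coordSeminorm (hN : IsNorm N) (hl : 1 ≤ l) : Seminorm ℝ (Fin d → ℝ) :=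
  Seminorm.ofSMulLE (coordNorm N l) (coordNorm_zero hN hl) (coordNorm_add_le hN hl)
    (coordNorm_smul_le hN hl)

@[simp] lemma coe_coordSeminorm (hN : IsNorm N) (hl : 1 ≤ l) :
    ⇑(coordSeminorm hN hl) = coordNorm N l := rfl

lemma coordNorm_nonneg (hN : IsNorm N) (hl : 1 ≤ l) (z : Fin d → ℝ) : 0 ≤ coordNorm N l z :=
  apply_nonneg (coordSeminorm hN hl) z

lemma coordNorm_smul (hN : IsNorm N) (hl : 1 ≤ l) (r : ℝ) (z : Fin d → ℝ) :
    coordNorm N l (r • z) = |r| * coordNorm N l z :=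
  map_smul_eq_mul (coordSeminorm hN hl) r z

lemma coordNorm_le_of_mem_RK (hN : IsNorm N) (hK : K.card ≤ l) (hz : z ∈ RK K) :
    coordNorm N l z ≤ N z :=
  coordNorm_le hN fun y hy => calc
    z ⬝ᵥ y ≤ N z * restStar N K y := dotProduct_le_mul_restStar hN hz
    _ ≤ N z * dualCoord N l y := mul_le_mul_of_nonneg_left (restStar_le_dualCoord hK) (hN.nonneg z)
    _ ≤ N z := mul_le_of_le_one_right (hN.nonneg z) hy

lemma dualCoord_le_of_forall_coordNorm_le_one (hN : IsNorm N)
    (h : ∀ z, coordNorm N l z ≤ 1 → z ⬝ᵥ y ≤ B) : dualCoord N l y ≤ B := by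
  obtain ⟨K, hK, hKy⟩ := exists_restStar_eq_dualCoord N l y
  rw [← hKy]
  exact restStar_le hN fun x hx hx1 => h x ((coordNorm_le_of_mem_RK hN hK hx).trans hx1)

lemma dotProduct_le_coordNorm_mul_dualCoord (hN : IsNorm N) (hl : 1 ≤ l) (z y : Fin d → ℝ) :
    z ⬝ᵥ y ≤ coordNorm N l z * dualCoord N l y := by
  rcases (dualCoord_nonneg hN (l := l) (y := y)).eq_or_lt with h | h
  · simp [eq_zero_of_dualCoord_eq_zero hN hl h.symm, dualCoord_zero_right hN]
  · have := dotProduct_le_coordNorm hN hl (x := z) (y := (dualCoord N l y)⁻¹ • y) (by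
      rw [dualCoord_smul hN, abs_of_pos (inv_pos.2 h), inv_mul_cancel₀ h.ne'])
    rwa [dotProduct_smul, smul_eq_mul, inv_mul_le_iff₀ h, mul_comm] at this

lemma isBounded_setOf_coordNorm_le (hN : IsNorm N) (hl : 1 ≤ l) (r : ℝ) :
    IsBounded {z | coordNorm N l z ≤ r} := by
  refine isBounded_setOf_seminorm_le (coordSeminorm hN hl) (fun z hz => funext fun i => ?_) r
  have h₁ := dotProduct_le_coordNorm_mul_dualCoord hN hl z (Pi.single i 1)
  have h₂ := dotProduct_le_coordNorm_mul_dualCoord hN hl z (-Pi.single i 1)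
  simp only [coe_coordSeminorm] at hz
  simp only [hz, zero_mul, dotProduct_neg, dotProduct_single, mul_one] at h₁ h₂
  simp only [Pi.zero_apply]
  linarith

end coordNorm

section capra

open Filter Topology

variable {K : Finset (Fin d)} {x y : Fin d → ℝ} {c : ℝ} {l : ℕ}

lemma ell0_eq_card (x : Fin d → ℝ) : ell0 x = (Finset.univ.filter (x · ≠ 0)).card := by
  rw [ell0, ← ncard_coe_finset]
  congr
  ext
  simp

lemma mem_RK_filter_ne_zero (x : Fin d → ℝ) : x ∈ RK (Finset.univ.filter (x · ≠ 0)) :=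
  fun j hj => by simpa using hj

lemma ell0_le (x : Fin d → ℝ) : ell0 x ≤ d := by
  rw [ell0_eq_card]
  exact (Finset.card_le_univ _).trans_eq (Fintype.card_fin d)

lemma ell0_zero : ell0 (0 : Fin d → ℝ) = 0 := by simp [ell0]

lemma capra_zero_left (N : (Fin d → ℝ) → ℝ) (y : Fin d → ℝ) : capra N 0 y = 0 := if_pos rfl

lemma capra_of_ne_zero (hx : x ≠ 0) : capra N x y = x ⬝ᵥ y / N x := if_neg hx

lemma capra_sub_eq_div (hN : IsNorm N) (hx : x ≠ 0) (y : Fin d → ℝ) (r : ℝ) :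
    capra N x y - r = (x ⬝ᵥ y - N x * r) / N x := by
  rw [capra_of_ne_zero hx]
  field_simp [(hN.pos hx).ne']

lemma continuousAt_capra (hN : IsNorm N) (hx : x ≠ 0) (y : Fin d → ℝ) :
    ContinuousAt (fun x => capra N x y) x := by
  refine ContinuousAt.congr_of_eventuallyEq (f := fun x => x ⬝ᵥ y / N x) ?_ ?_
  · exact ((continuous_id.dotProduct continuous_const).continuousAt).div
      hN.continuous.continuousAt (hN.pos hx).ne'
  · filter_upwards [isOpen_ne.mem_nhds hx] with x' hx' using capra_of_ne_zero hx'

lemma capra_le_dualCoord_ell0 (hN : IsNorm N) (hx : x ≠ 0) (y : Fin d → ℝ) :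
    capra N x y ≤ dualCoord N (ell0 x) y := by
  rw [capra_of_ne_zero hx, div_le_iff₀' (hN.pos hx)]
  exact (dotProduct_le_mul_restStar hN (mem_RK_filter_ne_zero x)).trans
    (mul_le_mul_of_nonneg_left (restStar_le_dualCoord (ell0_eq_card x).ge) (hN.nonneg x))

lemma exists_ell0_eq_card_lt_capra (hN : IsNorm N) (hxK : x ∈ RK K) (hx : x ≠ 0)
    (hc : c < capra N x y) : ∃ x', ell0 x' = K.card ∧ c < capra N x' y := by
  -- moving the zero coordinates of `x` inside `K` off zero makes the support exactly `K`
  set u : Fin d → ℝ := fun i => if i ∈ K ∧ x i = 0 then 1 else 0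
  have hsupp : ∀ δ : ℝ, δ ≠ 0 → ell0 (x + δ • u) = K.card := by
    intro δ hδ
    rw [ell0, show Function.support (x + δ • u) = K from ?_, ncard_coe_finset]
    ext i
    by_cases hi : i ∈ K <;> by_cases hxi : x i = 0 <;> simp [u, hi, hxi, hδ, hxK i]
  have hcont : ContinuousAt (fun δ : ℝ => capra N (x + δ • u) y) 0 :=
    (continuousAt_capra hN hx y).comp_of_eq (by fun_prop) (by simp)
  have hev : ∀ᶠ δ in 𝓝[≠] (0 : ℝ), c < capra N (x + δ • u) y :=
    (hcont.eventually (lt_mem_nhds (by simpa using hc))).filter_mono nhdsWithin_le_nhds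
  obtain ⟨δ, hδc, hδ0⟩ := (hev.and self_mem_nhdsWithin).exists
  exact ⟨_, hsupp δ hδ0, hδc⟩

lemma exists_ell0_eq_lt_capra (hN : IsNorm N) (hl : l ≤ d) (hc : 0 ≤ c)
    (hcl : c < dualCoord N l y) : ∃ x, ell0 x = l ∧ c < capra N x y := by
  obtain ⟨K₀, hK₀, hK₀y⟩ := exists_restStar_eq_dualCoord N l y
  obtain ⟨K, hK₀K, -, hK⟩ :=
    Finset.exists_subsuperset_card_eq (Finset.subset_univ K₀) hK₀ (by simpa using hl)
  obtain ⟨x, hxK, hx1, hcx⟩ :=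
    exists_lt_dotProduct_of_lt_restStar hN (hcl.trans_le (hK₀y ▸ restStar_mono hN hK₀K))
  have hx : x ≠ 0 := by
    rintro rfl
    exact (hc.trans_lt hcx).ne (zero_dotProduct y).symm
  have hcapra : c < capra N x y := hcx.trans_le <| by
    rw [capra_of_ne_zero hx]
    exact le_div_self (hc.trans hcx.le) (hN.pos hx) hx1
  obtain ⟨x', hx', hcx'⟩ := exists_ell0_eq_card_lt_capra hN hxK hx hcapra
  exact ⟨x', hx'.trans hK, hcx'⟩

end capra

section supDualCoordSub

variable {y : Fin d → ℝ} {B : ℝ} {l : ℕ} {φ : ℕ → ℝ}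

def supDualCoordSub (N : (Fin d → ℝ) → ℝ) (φ : ℕ → ℝ) (y : Fin d → ℝ) : ℝ :=
  (Finset.range (d + 1)).sup' Finset.nonempty_range_add_one fun l => dualCoord N l y - φ l

lemma sub_le_supDualCoordSub (hl : l ≤ d) : dualCoord N l y - φ l ≤ supDualCoordSub N φ y :=
  Finset.le_sup' (fun l => dualCoord N l y - φ l) (Finset.mem_range_succ_iff.2 hl)

lemma supDualCoordSub_le (h : ∀ l ≤ d, dualCoord N l y - φ l ≤ B) : supDualCoordSub N φ y ≤ B :=
  Finset.sup'_le _ _ fun l hl => h l (Finset.mem_range_succ_iff.1 hl)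

lemma exists_supDualCoordSub_eq (N : (Fin d → ℝ) → ℝ) (φ : ℕ → ℝ) (y : Fin d → ℝ) :
    ∃ l ≤ d, supDualCoordSub N φ y = dualCoord N l y - φ l := by
  obtain ⟨l, hl, h⟩ :=
    Finset.exists_mem_eq_sup' Finset.nonempty_range_add_one fun l => dualCoord N l y - φ l
  exact ⟨l, Finset.mem_range_succ_iff.1 hl, h⟩

lemma supDualCoordSub_nonneg (hN : IsNorm N) (hφ0 : φ 0 = 0) : 0 ≤ supDualCoordSub N φ y := by
  simpa [dualCoord_zero_left hN, hφ0] using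
    sub_le_supDualCoordSub (N := N) (φ := φ) (y := y) (Nat.zero_le d)

theorem capraConj_comp_ell0 (hN : IsNorm N) (hφnn : ∀ l ≤ d, 0 ≤ φ l) (hφ0 : φ 0 = 0)
    (y : Fin d → ℝ) :
    capraConj N (fun z => ((φ (ell0 z) : ℝ) : EReal)) y = supDualCoordSub N φ y := by
  simp only [capraConj, ← sub_eq_add_neg, ← EReal.coe_sub]
  refine iSup_coe_ereal_eq (fun x => ?_) (fun c hc => ?_)
  · rcases eq_or_ne x 0 with rfl | hx
    · simpa [capra_zero_left, ell0_zero, hφ0] using supDualCoordSub_nonneg hN hφ0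
    · linarith [capra_le_dualCoord_ell0 hN hx y,
        sub_le_supDualCoordSub (N := N) (φ := φ) (y := y) (ell0_le x)]
  · obtain ⟨l, hl, hly⟩ := exists_supDualCoordSub_eq N φ y
    rcases lt_or_ge c 0 with hc0 | hc0
    · exact ⟨0, by simpa [capra_zero_left, ell0_zero, hφ0] using hc0⟩
    · obtain ⟨x, rfl, hx⟩ := exists_ell0_eq_lt_capra hN hl (add_nonneg hc0 (hφnn l hl))
        (show c + φ l < dualCoord N l y by linarith)
      exact ⟨x, by linarith⟩

end supDualCoordSub

section decomposition

variable {a φ : ℕ → ℝ} {t b B : ℝ} {x y : Fin d → ℝ}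
  {w w₀ : Finset.Icc 1 d → Fin d → ℝ}

lemma one_le_of_mem_Icc (l : Finset.Icc 1 d) : 1 ≤ (l : ℕ) := (Finset.mem_Icc.1 l.2).1

/- A decomposition `(z⁽¹⁾, …, z⁽ᵈ⁾)` is indexed by the subtype `Icc 1 d`, so that decompositions
form a finite-dimensional space; `coordCost N 1 w` is the budget `∑ ⦀z⁽ˡ⁾⦀_l`. -/
def coordCost (N : (Fin d → ℝ) → ℝ) (a : ℕ → ℝ) (w : Finset.Icc 1 d → Fin d → ℝ) : ℝ :=
  ∑ l : Finset.Icc 1 d, a l * coordNorm N l (w l)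

def feasibleDecomps (N : (Fin d → ℝ) → ℝ) (t : ℝ) (x : Fin d → ℝ) :
    Set (Finset.Icc 1 d → Fin d → ℝ) :=
  {w | coordCost N 1 w ≤ t} ∩ {w | ∑ l, w l = x}

lemma coordCost_restrict (N : (Fin d → ℝ) → ℝ) (a : ℕ → ℝ) (z : ℕ → Fin d → ℝ) :
    coordCost N a (fun l => z l) = ∑ l ∈ Finset.Icc 1 d, a l * coordNorm N l (z l) :=
  Finset.sum_coe_sort (Finset.Icc 1 d) fun l => a l * coordNorm N l (z l)

lemma convexOn_coordCost (hN : IsNorm N) (ha : ∀ l ∈ Finset.Icc 1 d, 0 ≤ a l) :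
    ConvexOn ℝ univ (coordCost N a) := by
  refine ⟨convex_univ, fun u _ v _ r s hr hs hrs => ?_⟩
  simp only [coordCost, smul_eq_mul, Finset.mul_sum, ← Finset.sum_add_distrib]
  refine Finset.sum_le_sum fun l _ => ?_
  have := (coordSeminorm hN (one_le_of_mem_Icc l)).convexOn.2 (mem_univ (u l)) (mem_univ (v l))
    hr hs hrs
  simp only [coe_coordSeminorm, smul_eq_mul, Pi.add_apply, Pi.smul_apply] at this ⊢
  calc a l * coordNorm N l (r • u l + s • v l)
      ≤ a l * (r * coordNorm N l (u l) + s * coordNorm N l (v l)) :=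
        mul_le_mul_of_nonneg_left this (ha l l.2)
    _ = _ := by ring

lemma continuous_coordCost (hN : IsNorm N) (ha : ∀ l ∈ Finset.Icc 1 d, 0 ≤ a l) :
    Continuous (coordCost N a) :=
  (convexOn_coordCost hN ha).locallyLipschitz.continuous

lemma coordCost_zero (hN : IsNorm N) (a : ℕ → ℝ) : coordCost N a 0 = 0 := by
  simp [coordCost, coordNorm_zero hN (one_le_of_mem_Icc _)]

lemma coordCost_single (hN : IsNorm N) (a : ℕ → ℝ) (l : Finset.Icc 1 d) (z : Fin d → ℝ) :
    coordCost N a (Pi.single l z) = a l * coordNorm N l z := by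
  rw [coordCost, Finset.sum_eq_single l (fun l' _ hl' => by
    simp [hl', coordNorm_zero hN (one_le_of_mem_Icc l')]) (by simp)]
  simp

lemma coordNorm_le_coordCost_one (hN : IsNorm N) (w : Finset.Icc 1 d → Fin d → ℝ)
    (l : Finset.Icc 1 d) : coordNorm N l (w l) ≤ coordCost N 1 w := by
  simpa [coordCost] using Finset.single_le_sum (f := fun l : Finset.Icc 1 d => coordNorm N l (w l))
    (fun l _ => coordNorm_nonneg hN (one_le_of_mem_Icc l) _) (Finset.mem_univ l)

lemma isCompact_setOf_coordCost_one_le (hN : IsNorm N) (t : ℝ) :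
    IsCompact {w : Finset.Icc 1 d → Fin d → ℝ | coordCost N 1 w ≤ t} := by
  refine Metric.isCompact_of_isClosed_isBounded
    (isClosed_le (continuous_coordCost hN fun _ _ => zero_le_one) continuous_const) ?_
  exact (IsBounded.pi fun l => isBounded_setOf_coordNorm_le hN (one_le_of_mem_Icc l) t).subset
    fun w hw l _ => (coordNorm_le_coordCost_one hN w l).trans hw

lemma exists_isMinOn_coordCost (hN : IsNorm N) (hφnn : ∀ l ≤ d, 0 ≤ φ l) (hx : x ≠ 0) :
    ∃ w₀ ∈ feasibleDecomps N (N x) x, IsMinOn (coordCost N φ) (feasibleDecomps N (N x) x) w₀ := by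
  have hd : d ∈ Finset.Icc 1 d := by
    refine Finset.mem_Icc.2 ⟨Nat.one_le_iff_ne_zero.2 ?_, le_rfl⟩
    rintro rfl
    exact hx (Subsingleton.elim _ _)
  refine ((isCompact_setOf_coordCost_one_le hN _).inter_right
    (isClosed_eq (continuous_finsetSum _ fun l _ => continuous_apply l)
      continuous_const)).exists_isMinOn
    ⟨Pi.single ⟨d, hd⟩ x, ?_, by simp⟩
    (continuous_coordCost hN fun l hl => hφnn l (Finset.mem_Icc.1 hl).2).continuousOn
  show coordCost N 1 (Pi.single _ x) ≤ N x
  rw [coordCost_single hN, Pi.one_apply, one_mul]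
  exact coordNorm_le_of_mem_RK hN (K := Finset.univ) (by simp)
    fun j hj => absurd (Finset.mem_univ j) hj

lemma isLeast_coordCost (hw₀ : w₀ ∈ feasibleDecomps N t x)
    (hmin : IsMinOn (coordCost N φ) (feasibleDecomps N t x) w₀) :
    IsLeast {r : ℝ | ∃ z : ℕ → (Fin d → ℝ),
      (∑ l ∈ Finset.Icc 1 d, coordNorm N l (z l)) ≤ t ∧
      (∑ l ∈ Finset.Icc 1 d, z l) = x ∧
      r = ∑ l ∈ Finset.Icc 1 d, φ l * coordNorm N l (z l)} (coordCost N φ w₀) := by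
  have hcost₁ : ∀ z : ℕ → Fin d → ℝ,
      coordCost N 1 (fun l => z l) = ∑ l ∈ Finset.Icc 1 d, coordNorm N l (z l) := fun z => by
    simpa using coordCost_restrict N 1 z
  constructor
  · set z₀ : ℕ → Fin d → ℝ := fun l => if h : l ∈ Finset.Icc 1 d then w₀ ⟨l, h⟩ else 0
    have hz₀ : (fun l : Finset.Icc 1 d => z₀ l) = w₀ := funext fun l => dif_pos l.2
    refine ⟨z₀, ?_, ?_, ?_⟩
    · rw [← hcost₁, hz₀]
      exact hw₀.1
    · simpa [← Finset.sum_coe_sort (Finset.Icc 1 d), hz₀] using hw₀.2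
    · rw [← coordCost_restrict, hz₀]
  · rintro r ⟨z, hz₁, hz₂, rfl⟩
    rw [← coordCost_restrict]
    exact hmin ⟨(hcost₁ z).trans_le hz₁,
      by simpa [← Finset.sum_coe_sort (Finset.Icc 1 d)] using hz₂⟩

lemma dotProduct_sum_sub_coordCost_le (hN : IsNorm N) (w : Finset.Icc 1 d → Fin d → ℝ)
    (y : Fin d → ℝ) :
    (∑ l, w l) ⬝ᵥ y - coordCost N φ w ≤ coordCost N 1 w * supDualCoordSub N φ y := by
  rw [sum_dotProduct, coordCost, coordCost, Finset.sum_mul, ← Finset.sum_sub_distrib]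
  refine Finset.sum_le_sum fun l _ => ?_
  have hl := one_le_of_mem_Icc l
  have h₁ := dotProduct_le_coordNorm_mul_dualCoord hN hl (w l) y
  have h₂ := sub_le_supDualCoordSub (N := N) (φ := φ) (y := y) (Finset.mem_Icc.1 l.2).2
  have h₃ := mul_le_mul_of_nonneg_left h₂ (coordNorm_nonneg hN hl (w l))
  simp only [Pi.one_apply, one_mul]
  nlinarith

lemma mul_supDualCoordSub_le (hN : IsNorm N) (hφnn : ∀ l ≤ d, 0 ≤ φ l) (hφ0 : φ 0 = 0)
    (ht : 0 < t) (h : ∀ w, coordCost N 1 w ≤ t → (∑ l, w l) ⬝ᵥ y - coordCost N φ w ≤ B) :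
    t * supDualCoordSub N φ y ≤ B := by
  rw [← le_div_iff₀' ht]
  refine supDualCoordSub_le fun l hl => ?_
  rcases Nat.eq_zero_or_pos l with rfl | hl₁
  · have := h 0 (by rw [coordCost_zero hN]; exact ht.le)
    simp only [Pi.zero_apply, Finset.sum_const_zero, zero_dotProduct, coordCost_zero hN,
      sub_zero] at this
    simpa [dualCoord_zero_left hN, hφ0] using div_nonneg this ht.le
  · replace hl₁ : 1 ≤ l := hl₁
    rw [sub_le_iff_le_add]
    refine dualCoord_le_of_forall_coordNorm_le_one hN fun z hz => ?_
    have hlI : l ∈ Finset.Icc 1 d := Finset.mem_Icc.2 ⟨hl₁, hl⟩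
    have := h (Pi.single ⟨l, hlI⟩ (t • z)) (by
      rw [coordCost_single hN, Pi.one_apply, one_mul, coordNorm_smul hN hl₁, abs_of_pos ht]
      exact mul_le_of_le_one_right ht.le hz)
    rw [coordCost_single hN, coordNorm_smul hN hl₁, abs_of_pos ht, Finset.sum_pi_single',
      if_pos (Finset.mem_univ _), smul_dotProduct, smul_eq_mul] at this
    change t * z ⬝ᵥ y - φ l * (t * coordNorm N l z) ≤ B at this
    have hφ : φ l * (t * coordNorm N l z) ≤ φ l * t :=
      mul_le_mul_of_nonneg_left (mul_le_of_le_one_right ht.le hz) (hφnn l hl)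
    rw [div_add' _ _ _ ht.ne', le_div_iff₀' ht]
    linarith

lemma dotProduct_sub_mul_supDualCoordSub_le (hN : IsNorm N) (hφ0 : φ 0 = 0)
    (hw : w ∈ feasibleDecomps N t x) (y : Fin d → ℝ) :
    x ⬝ᵥ y - t * supDualCoordSub N φ y ≤ coordCost N φ w := by
  have := dotProduct_sum_sub_coordCost_le hN (φ := φ) w y
  rw [hw.2] at this
  nlinarith [mul_le_mul_of_nonneg_right hw.1 (supDualCoordSub_nonneg hN hφ0 (N := N) (y := y))]

lemma exists_le_dotProduct_sub_mul_supDualCoordSub (hN : IsNorm N) (hφnn : ∀ l ≤ d, 0 ≤ φ l)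
    (hφ0 : φ 0 = 0) (hx : x ≠ 0) (hw₀ : w₀ ∈ feasibleDecomps N (N x) x)
    (hmin : IsMinOn (coordCost N φ) (feasibleDecomps N (N x) x) w₀) (hb : b < coordCost N φ w₀) :
    ∃ y, b ≤ x ⬝ᵥ y - N x * supDualCoordSub N φ y := by
  have hφ : ∀ l ∈ Finset.Icc 1 d, 0 ≤ φ l := fun l hl => hφnn l (Finset.mem_Icc.1 hl).2
  have hsum : ∀ w : Finset.Icc 1 d → Fin d → ℝ,
      (∑ l, ContinuousLinearMap.proj (R := ℝ) l) w = ∑ l, w l := fun w => by simp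
  obtain ⟨ℓ, hℓ⟩ := exists_dual_sub_lt_of_isMinOn (∑ l, ContinuousLinearMap.proj l)
    (isCompact_setOf_coordCost_one_le hN (N x)) (continuous_coordCost hN hφ)
    ((convexOn_coordCost hN hφ).subset (subset_univ _)
      (by simpa using (convexOn_coordCost hN (a := 1) fun _ _ => zero_le_one).convex_le (N x)))
    hw₀.1 (fun w hw hAw => hmin ⟨hw, by rwa [hsum, hsum, hw₀.2] at hAw⟩) hb
  obtain ⟨y, hy⟩ := ℓ.exists_apply_eq_dotProduct
  refine ⟨y, ?_⟩
  have := mul_supDualCoordSub_le hN hφnn hφ0 (hN.pos hx) (y := y) (B := x ⬝ᵥ y - b)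
    fun w hw => by
      have := hℓ w hw
      rw [hsum, hsum, hw₀.2, hy, hy] at this
      linarith
  linarith

end decomposition

end CoordinateNorms

theorem statement14 {d : ℕ} (N : (Fin d → ℝ) → ℝ) (hN : IsNorm N) (φ : ℕ → ℝ)
    (hφnn : ∀ l ≤ d, 0 ≤ φ l) (hφ0 : φ 0 = 0) (x : Fin d → ℝ) (hx : x ≠ 0) :
    ∃ m : ℝ,
      IsLeast
        {r : ℝ | ∃ z : ℕ → (Fin d → ℝ),
          (∑ l ∈ Finset.Icc 1 d, coordNorm N l (z l)) ≤ N x ∧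
          (∑ l ∈ Finset.Icc 1 d, z l) = x ∧
          r = ∑ l ∈ Finset.Icc 1 d, φ l * coordNorm N l (z l)} m ∧
      capraBiconj N (fun z => ((φ (ell0 z) : ℝ) : EReal)) x = ((m / N x : ℝ) : EReal) := by
  obtain ⟨w₀, hw₀, hmin⟩ := exists_isMinOn_coordCost hN hφnn hx
  refine ⟨coordCost N φ w₀, isLeast_coordCost hw₀ hmin, ?_⟩
  have hNx := hN.pos hx
  simp only [capraBiconj, capraConj_comp_ell0 hN hφnn hφ0, ← sub_eq_add_neg, ← EReal.coe_sub,
    capra_sub_eq_div hN hx]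
  refine iSup_coe_ereal_eq (fun y => ?_) (fun c hc => ?_)
  · exact div_le_div_of_nonneg_right (dotProduct_sub_mul_supDualCoordSub_le hN hφ0 hw₀ y) hNx.le
  · obtain ⟨b, hcb, hbm⟩ := exists_between ((lt_div_iff₀ hNx).1 hc)
    obtain ⟨y, hy⟩ := exists_le_dotProduct_sub_mul_supDualCoordSub hN hφnn hφ0 hx hw₀ hmin hbm
    exact ⟨y, (lt_div_iff₀ hNx).2 (hcb.trans_le hy)⟩
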